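/- arXiv:1404.0419 — 7 statements merged into one kernel-verified Lean document; each statement's English description precedes it below -/
import Mathlib

section
/- Let V ⊆ R^d be a finite set and x, y1, y2, y3 distinct points of V such that {x, y2} is a double-normal pair of V (i.e., for all z ∈ V, 0 ≤ ⟨z − y2, x − y2⟩ and 0 ≤ ⟨z − x, y2 − x⟩). Let 0 < ε and suppose the angle ∠y1 y2 y3 > π − ε. If u is a unit vector parallel to y1 − y2 and v is a unit vector parallel to x − y2, then |⟨u,v⟩| < ε. -/
open RealInnerProductSpace Real EuclideanGeometry

private lemma aux_unit {E : Type*} [NormedAddCommGroup E] [InnerProductSpace ℝ E]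
    {A B W : E} (hA : ‖A‖ = 1) (hB : ‖B‖ = 1) (hW : ‖W‖ = 1)
    (hs0 : 0 ≤ ⟪A, W⟫) (ht0 : 0 ≤ ⟪B, W⟫) {ε : ℝ} (hε : 0 < ε) (hε1 : ε ≤ 1)
    (hAB : ⟪A, B⟫ < -Real.cos ε) : ⟪A, W⟫ < ε := by
  have hεπ2 : ε < π / 2 := by linarith [Real.pi_gt_three]
  have hcosε : 0 < Real.cos ε := Real.cos_pos_of_mem_Ioo ⟨by linarith, hεπ2⟩
  set s : ℝ := ⟪A, W⟫ with hs_def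
  set t : ℝ := ⟪B, W⟫ with ht_def
  have hs1 : s ≤ 1 := by
    have := real_inner_le_norm A W; rw [hA, hW, mul_one] at this; exact this
  have ht1 : t ≤ 1 := by
    have := real_inner_le_norm B W; rw [hB, hW, mul_one] at this; exact this
  have hAW : ‖A - s • W‖ ^ 2 = 1 - s ^ 2 := by
    rw [norm_sub_sq_real, real_inner_smul_right, norm_smul, hA, hW]
    simp [Real.norm_eq_abs]
    nlinarith [sq_abs s]
  have hBW : ‖B - t • W‖ ^ 2 = 1 - t ^ 2 := by
    rw [norm_sub_sq_real, real_inner_smul_right, norm_smul, hB, hW]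
    simp [Real.norm_eq_abs]
    nlinarith [sq_abs t]
  have hinner : ⟪A - s • W, B - t • W⟫ = ⟪A, B⟫ - s * t := by
    have h1 : ⟪W, B⟫ = t := by rw [real_inner_comm]
    have h2 : ⟪W, A⟫ = s := by rw [real_inner_comm]
    have h3 : ⟪W, W⟫ = (1:ℝ) := by
      rw [real_inner_self_eq_norm_sq, hW]; norm_num
    simp only [inner_sub_left, inner_sub_right, real_inner_smul_left,
      real_inner_smul_right, h1, h2, h3, ← hs_def, ← ht_def]
    ring
  have hCS : s * t - ⟪A, B⟫ ≤ Real.sqrt (1 - s ^ 2) * Real.sqrt (1 - t ^ 2) := by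
    have h := abs_real_inner_le_norm (A - s • W) (B - t • W)
    rw [hinner] at h
    have h1 : ‖A - s • W‖ = Real.sqrt (1 - s ^ 2) := by
      rw [← hAW, Real.sqrt_sq (norm_nonneg _)]
    have h2 : ‖B - t • W‖ = Real.sqrt (1 - t ^ 2) := by
      rw [← hBW, Real.sqrt_sq (norm_nonneg _)]
    rw [h1, h2] at h
    linarith [(abs_le.mp h).1]
  have hsinε : s < Real.sin ε := by
    by_contra hcon
    push_neg at hcon
    have hsinpos : 0 < Real.sin ε := Real.sin_pos_of_pos_of_lt_pi hε
      (by linarith [Real.pi_gt_three])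
    have h1s : 1 - s ^ 2 ≤ Real.cos ε ^ 2 := by
      have := Real.sin_sq_add_cos_sq ε
      nlinarith
    have h1t : 1 - t ^ 2 ≤ 1 := by nlinarith
    have hkey : Real.sqrt (1 - s ^ 2) * Real.sqrt (1 - t ^ 2) ≤ Real.cos ε := by
      calc Real.sqrt (1 - s ^ 2) * Real.sqrt (1 - t ^ 2)
          ≤ Real.sqrt (Real.cos ε ^ 2) * Real.sqrt 1 :=
            mul_le_mul (Real.sqrt_le_sqrt h1s) (Real.sqrt_le_sqrt h1t)
              (Real.sqrt_nonneg _) (Real.sqrt_nonneg _)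
        _ = Real.cos ε := by rw [Real.sqrt_one, Real.sqrt_sq hcosε.le, mul_one]
    nlinarith
  calc s < Real.sin ε := hsinε
    _ < ε := Real.sin_lt hε

theorem stmt_1 {d : ℕ} (V : Set (EuclideanSpace ℝ (Fin d)))
    (x y1 y2 y3 : EuclideanSpace ℝ (Fin d))
    (hx : x ∈ V) (h1 : y1 ∈ V) (h2 : y2 ∈ V) (h3 : y3 ∈ V)
    (hdist : [x, y1, y2, y3].Pairwise (· ≠ ·))
    (hdn : ∀ z ∈ V, 0 ≤ ⟪z - y2, x - y2⟫ ∧ 0 ≤ ⟪z - x, y2 - x⟫)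
    {ε : ℝ} (hε : 0 < ε)
    (hang : π - ε < ∠ y1 y2 y3)
    (u v : EuclideanSpace ℝ (Fin d)) (hu : ‖u‖ = 1) (hv : ‖v‖ = 1)
    (hupar : ∃ c : ℝ, u = c • (y1 - y2)) (hvpar : ∃ c : ℝ, v = c • (x - y2)) :
    |⟪u, v⟫| < ε := by
  rcases le_or_gt ε 1 with hε1 | hε1
  swap
  · calc |⟪u, v⟫| ≤ ‖u‖ * ‖v‖ := abs_real_inner_le_norm u v
      _ = 1 := by rw [hu, hv, mul_one]
      _ < ε := hε1
  simp only [List.pairwise_cons, List.mem_cons, List.not_mem_nil, or_false] at hdist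
  have hxy2 : x ≠ y2 := hdist.1 y2 (Or.inr (Or.inl rfl))
  have hy12 : y1 ≠ y2 := hdist.2.1 y2 (Or.inl rfl)
  have hy32 : y3 ≠ y2 := (hdist.2.2.1 y3 rfl).symm
  set a := y1 - y2 with ha_def
  set b := y3 - y2 with hb_def
  set w := x - y2 with hw_def
  have ha : a ≠ 0 := sub_ne_zero.2 hy12
  have hb : b ≠ 0 := sub_ne_zero.2 hy32
  have hw : w ≠ 0 := sub_ne_zero.2 hxy2
  have haw : (0:ℝ) ≤ ⟪a, w⟫ := (hdn y1 h1).1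
  have hbw : (0:ℝ) ≤ ⟪b, w⟫ := (hdn y3 h3).1
  have hna : (0:ℝ) < ‖a‖ := norm_pos_iff.2 ha
  have hnb : (0:ℝ) < ‖b‖ := norm_pos_iff.2 hb
  have hnw : (0:ℝ) < ‖w‖ := norm_pos_iff.2 hw
  set A : EuclideanSpace ℝ (Fin d) := ‖a‖⁻¹ • a with hA_def
  set B : EuclideanSpace ℝ (Fin d) := ‖b‖⁻¹ • b with hB_def
  set W : EuclideanSpace ℝ (Fin d) := ‖w‖⁻¹ • w with hW_def
  have hA : ‖A‖ = 1 := by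
    rw [hA_def, norm_smul, norm_inv, norm_norm, inv_mul_cancel₀ hna.ne']
  have hB : ‖B‖ = 1 := by
    rw [hB_def, norm_smul, norm_inv, norm_norm, inv_mul_cancel₀ hnb.ne']
  have hW : ‖W‖ = 1 := by
    rw [hW_def, norm_smul, norm_inv, norm_norm, inv_mul_cancel₀ hnw.ne']
  have hs0 : (0:ℝ) ≤ ⟪A, W⟫ := by
    rw [hA_def, hW_def, real_inner_smul_left, real_inner_smul_right]
    positivity
  have ht0 : (0:ℝ) ≤ ⟪B, W⟫ := by
    rw [hB_def, hW_def, real_inner_smul_left, real_inner_smul_right]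
    positivity
  -- angle bound
  have hangle : ∠ y1 y2 y3 = InnerProductGeometry.angle a b := by
    rw [EuclideanGeometry.angle, ha_def, hb_def]
    congr 1 <;> exact (vsub_eq_sub _ _)
  have hcosval : Real.cos (InnerProductGeometry.angle a b) = ⟪A, B⟫ := by
    rw [InnerProductGeometry.cos_angle, hA_def, hB_def, real_inner_smul_left,
      real_inner_smul_right]
    field_simp
  have hcos : Real.cos (InnerProductGeometry.angle a b) < Real.cos (π - ε) := by
    apply Real.strictAntiOn_cos
    · exact Set.mem_Icc.2 ⟨by linarith [Real.pi_gt_three], by linarith⟩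
    · exact ⟨InnerProductGeometry.angle_nonneg a b, InnerProductGeometry.angle_le_pi a b⟩
    · rw [← hangle]; exact hang
  rw [Real.cos_pi_sub, hcosval] at hcos
  have hmain : ⟪A, W⟫ < ε := aux_unit hA hB hW hs0 ht0 hε hε1 hcos
  -- relate ⟪u, v⟫ to ⟪A, W⟫
  obtain ⟨c, hc⟩ := hupar
  obtain ⟨c', hc'⟩ := hvpar
  have hcabs : |c| = ‖a‖⁻¹ := by
    have h : ‖u‖ = |c| * ‖a‖ := by rw [hc, norm_smul, Real.norm_eq_abs]
    rw [hu] at h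
    field_simp
    linarith
  have hcabs' : |c'| = ‖w‖⁻¹ := by
    have h : ‖v‖ = |c'| * ‖w‖ := by rw [hc', norm_smul, Real.norm_eq_abs]
    rw [hv] at h
    field_simp
    linarith
  have huv : |⟪u, v⟫| = ⟪A, W⟫ := by
    rw [hc, hc', real_inner_smul_left, real_inner_smul_right, hA_def, hW_def,
      real_inner_smul_left, real_inner_smul_right, abs_mul, abs_mul, hcabs, hcabs',
      abs_of_nonneg haw]
  rw [huv]
  exact hmain
end

section
/- Let x1, x2, y1, y2, y3 be distinct points in a set V ⊆ R^d such that {x1,y2} and {x2,y2} are double-normal pairs of V. Let ε > 0 and suppose ∠y1 y2 y3 > π − ε. Then for any unit vector u parallel to y1 − y2 and any unit vector v in the plane spanned by x1 − y2 and x2 − y2, we have |⟨u,v⟩| < 2ε / sin(∠x1 y2 x2). -/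
/-!
Put `δ = π - ∠ y1 y2 y3 < ε`. Both `y1` and `y3` lie in the half-space
`⟪z - y2, x1 - y2⟫ ≥ 0`, so by the triangle inequality for angles `∠ y1 y2 x1 ≥ π / 2 - δ`, and
`|⟪u, x1 - y2⟫| ≤ δ ‖x1 - y2‖`; likewise for `x2`. Writing `v = s (x1 - y2) + t (x2 - y2)` and
`θ = ∠ x1 y2 x2`, the component of `v` orthogonal to either spanning vector bounds
`|s| ‖x1 - y2‖ sin θ` and `|t| ‖x2 - y2‖ sin θ` by `‖v‖ = 1`, whence `|⟪u, v⟫| ≤ 2 δ / sin θ`.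
Double normality keeps `θ` in `(0, π / 2]`: it is acute, and it cannot vanish since neither of
`x1`, `x2` can lie strictly beyond the other on a common ray from `y2`.
-/

open RealInnerProductSpace Real

namespace InnerProductGeometry

variable {E : Type*} [NormedAddCommGroup E] [InnerProductSpace ℝ E]

theorem angle_le_pi_div_two_of_inner_nonneg {x y : E} (h : 0 ≤ ⟪x, y⟫) : angle x y ≤ π / 2 :=
  arccos_le_pi_div_two.2 (div_nonneg h (by positivity))

/-- By the triangle inequality for angles,
`angle p w ≥ angle p q - angle w q ≥ angle p q - π / 2`. -/
theorem cos_angle_le_pi_sub_angle {p q w : E} (hqw : 0 ≤ ⟪q, w⟫) :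
    cos (angle p w) ≤ π - angle p q := by
  have htri := angle_le_angle_add_angle p w q
  have hwq : angle w q ≤ π / 2 := angle_le_pi_div_two_of_inner_nonneg (by rwa [real_inner_comm])
  rcases le_or_gt (π / 2) (angle p w) with hobtuse | hacute
  · have : cos (angle p w) ≤ 0 :=
      cos_nonpos_of_pi_div_two_le_of_le hobtuse (by linarith [angle_le_pi p w, pi_pos])
    linarith [angle_le_pi p q]
  · calc cos (angle p w) = sin (π / 2 - angle p w) := (sin_pi_div_two_sub _).symm
      _ ≤ π / 2 - angle p w := sin_le (by linarith)
      _ ≤ π - angle p q := by linarith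

theorem abs_inner_smul_le_of_inner_nonneg {p q w : E} (c : ℝ) (hpw : 0 ≤ ⟪p, w⟫)
    (hqw : 0 ≤ ⟪q, w⟫) :
    |⟪c • p, w⟫| ≤ (π - angle p q) * (‖c • p‖ * ‖w‖) := by
  rw [real_inner_smul_left, abs_mul, abs_of_nonneg hpw, ← cos_angle_mul_norm_mul_norm,
    norm_smul, Real.norm_eq_abs]
  calc |c| * (cos (angle p w) * (‖p‖ * ‖w‖)) ≤ |c| * ((π - angle p q) * (‖p‖ * ‖w‖)) := by
        gcongr
        exact cos_angle_le_pi_sub_angle hqw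
    _ = (π - angle p q) * (|c| * ‖p‖ * ‖w‖) := by ring

/-- The component of `s • a + t • b` orthogonal to `a` has length `|t| * ‖b‖ * sin (angle a b)`;
in Gram-determinant form, `‖a‖²‖v‖² - ⟪a, v⟫² = t² (‖a‖²‖b‖² - ⟪a, b⟫²)`. -/
theorem abs_mul_norm_mul_sin_angle_le_norm (a b : E) (s t : ℝ) :
    |t| * ‖b‖ * sin (angle a b) ≤ ‖s • a + t • b‖ := by
  rcases eq_or_ne a 0 with rfl | ha
  · simp [norm_smul]
  have hsin : (sin (angle a b) * (‖a‖ * ‖b‖)) ^ 2 = ‖a‖ ^ 2 * ‖b‖ ^ 2 - ⟪a, b⟫ ^ 2 := by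
    rw [← cos_angle_mul_norm_mul_norm]
    linear_combination (‖a‖ * ‖b‖) ^ 2 * sin_sq_add_cos_sq (angle a b)
  have hinner : ⟪a, s • a + t • b⟫ = s * ‖a‖ ^ 2 + t * ⟪a, b⟫ := by
    rw [inner_add_right, real_inner_smul_right, real_inner_smul_right, real_inner_self_eq_norm_sq]
  have hnorm : ‖s • a + t • b‖ ^ 2 = s ^ 2 * ‖a‖ ^ 2 + 2 * s * t * ⟪a, b⟫ + t ^ 2 * ‖b‖ ^ 2 := by
    rw [norm_add_sq_real, norm_smul, norm_smul, real_inner_smul_left, real_inner_smul_right,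
      Real.norm_eq_abs, Real.norm_eq_abs, mul_pow, mul_pow, sq_abs, sq_abs]
    ring
  have hgram : ‖a‖ ^ 2 * (|t| * ‖b‖ * sin (angle a b)) ^ 2 ≤ ‖a‖ ^ 2 * ‖s • a + t • b‖ ^ 2 := by
    have : ‖a‖ ^ 2 * (|t| * ‖b‖ * sin (angle a b)) ^ 2
        = ‖a‖ ^ 2 * ‖s • a + t • b‖ ^ 2 - ⟪a, s • a + t • b⟫ ^ 2 := by
      rw [hinner, hnorm]
      linear_combination t ^ 2 * hsin + ‖a‖ ^ 2 * ‖b‖ ^ 2 * sin (angle a b) ^ 2 * sq_abs t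
    nlinarith
  have hpos : 0 < ‖a‖ ^ 2 := by positivity
  rw [← sq_le_sq₀ (by positivity [sin_angle_nonneg a b]) (norm_nonneg _)]
  exact le_of_mul_le_mul_left hgram hpos

theorem abs_inner_mul_sin_angle_le {u a b v : E} {δ : ℝ} (hδ : 0 ≤ δ)
    (ha : |⟪u, a⟫| ≤ δ * ‖a‖) (hb : |⟪u, b⟫| ≤ δ * ‖b‖) (hv : v ∈ Submodule.span ℝ {a, b}) :
    |⟪u, v⟫| * sin (angle a b) ≤ 2 * δ * ‖v‖ := by
  obtain ⟨s, t, rfl⟩ := Submodule.mem_span_pair.1 hv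
  have hsin := sin_angle_nonneg a b
  have hs : |s| * ‖a‖ * sin (angle a b) ≤ ‖s • a + t • b‖ := by
    rw [angle_comm, add_comm]
    exact abs_mul_norm_mul_sin_angle_le_norm b a t s
  have ht := abs_mul_norm_mul_sin_angle_le_norm a b s t
  have hsplit : |⟪u, s • a + t • b⟫| ≤ |s| * |⟪u, a⟫| + |t| * |⟪u, b⟫| := by
    rw [inner_add_right, real_inner_smul_right, real_inner_smul_right, ← abs_mul, ← abs_mul]
    exact abs_add_le _ _
  calc |⟪u, s • a + t • b⟫| * sin (angle a b)
      ≤ (|s| * (δ * ‖a‖) + |t| * (δ * ‖b‖)) * sin (angle a b) := by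
        gcongr
        exact hsplit.trans (by gcongr)
    _ = δ * (|s| * ‖a‖ * sin (angle a b) + |t| * ‖b‖ * sin (angle a b)) := by ring
    _ ≤ δ * (‖s • a + t • b‖ + ‖s • a + t • b‖) := by gcongr
    _ = 2 * δ * ‖s • a + t • b‖ := by ring

theorem angle_ne_zero_of_inner_sub_nonneg {a b : E} (hab : a ≠ b) (ha : 0 ≤ ⟪a - b, a⟫)
    (hb : 0 ≤ ⟪b - a, b⟫) : angle a b ≠ 0 := by
  intro h
  obtain ⟨ha0, r, hr, rfl⟩ := angle_eq_zero_iff.1 h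
  have hpos : 0 < ‖a‖ ^ 2 := by positivity
  simp only [inner_sub_left, real_inner_smul_left, real_inner_smul_right,
    real_inner_self_eq_norm_sq, norm_smul, Real.norm_eq_abs, abs_of_pos hr, mul_pow] at ha hb
  have hr1 : r = 1 := le_antisymm (by nlinarith) (by nlinarith [mul_pos hr hpos])
  exact hab (by rw [hr1, one_smul])

end InnerProductGeometry

open EuclideanGeometry InnerProductGeometry

section DoubleNormal

variable {E : Type*} [NormedAddCommGroup E] [InnerProductSpace ℝ E]

def IsDoubleNormalPair (S : Set E) (p q : E) : Prop :=
  ∀ z ∈ S, 0 ≤ ⟪z - p, q - p⟫ ∧ 0 ≤ ⟪z - q, p - q⟫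

theorem IsDoubleNormalPair.sin_angle_pos {S : Set E} {y x₁ x₂ : E}
    (h₁ : IsDoubleNormalPair S y x₁) (h₂ : IsDoubleNormalPair S y x₂) (hx₁ : x₁ ∈ S)
    (hx₂ : x₂ ∈ S) (hne : x₁ ≠ x₂) : 0 < sin (∠ x₁ y x₂) := by
  have hflip : ∀ a b : E, ⟪b - a, y - a⟫ = ⟪(a - y) - (b - y), a - y⟫ := fun a b => by
    rw [← inner_neg_neg]; congr 1 <;> abel
  have hne0 : ∠ x₁ y x₂ ≠ 0 :=
    angle_ne_zero_of_inner_sub_nonneg (sub_left_injective.ne hne)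
      (hflip x₁ x₂ ▸ (h₁ x₂ hx₂).2) (hflip x₂ x₁ ▸ (h₂ x₁ hx₁).2)
  have hle : ∠ x₁ y x₂ ≤ π / 2 :=
    angle_le_pi_div_two_of_inner_nonneg (by rw [real_inner_comm]; exact (h₁ x₂ hx₂).1)
  exact sin_pos_of_pos_of_lt_pi ((angle_nonneg _ _ _).lt_of_ne' hne0) (by linarith [pi_pos])

theorem IsDoubleNormalPair.abs_inner_smul_le {S : Set E} {y x z z' : E}
    (h : IsDoubleNormalPair S y x) (hz : z ∈ S) (hz' : z' ∈ S) (c : ℝ) :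
    |⟪c • (z - y), x - y⟫| ≤ (π - ∠ z y z') * (‖c • (z - y)‖ * ‖x - y‖) :=
  abs_inner_smul_le_of_inner_nonneg c (h z hz).1 (h z' hz').1

end DoubleNormal

theorem stmt_2_general {d : ℕ} (V : Set (EuclideanSpace ℝ (Fin d)))
    (x1 x2 y1 y2 y3 : EuclideanSpace ℝ (Fin d))
    (hx1 : x1 ∈ V) (hx2 : x2 ∈ V) (h1 : y1 ∈ V) (h3 : y3 ∈ V)
    (hdist : [x1, x2, y1, y2, y3].Pairwise (· ≠ ·))
    (hdn1 : ∀ z ∈ V, 0 ≤ ⟪z - y2, x1 - y2⟫ ∧ 0 ≤ ⟪z - x1, y2 - x1⟫)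
    (hdn2 : ∀ z ∈ V, 0 ≤ ⟪z - y2, x2 - y2⟫ ∧ 0 ≤ ⟪z - x2, y2 - x2⟫)
    {ε : ℝ}
    (hang : π - ε < ∠ y1 y2 y3)
    (u v : EuclideanSpace ℝ (Fin d)) (hu : ‖u‖ = 1) (hv : ‖v‖ = 1)
    (hupar : ∃ c : ℝ, u = c • (y1 - y2))
    (hvspan : v ∈ Submodule.span ℝ {x1 - y2, x2 - y2}) :
    |⟪u, v⟫| < 2 * ε / Real.sin (∠ x1 y2 x2) := by
  obtain ⟨c, rfl⟩ := hupar
  have hsin : 0 < sin (∠ x1 y2 x2) :=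
    IsDoubleNormalPair.sin_angle_pos hdn1 hdn2 hx1 hx2 (List.rel_of_pairwise_cons hdist (by simp))
  have hbound : |⟪c • (y1 - y2), v⟫| * sin (∠ x1 y2 x2) ≤ 2 * (π - ∠ y1 y2 y3) * ‖v‖ :=
    abs_inner_mul_sin_angle_le (by linarith [angle_le_pi y1 y2 y3])
      (by simpa [hu] using IsDoubleNormalPair.abs_inner_smul_le hdn1 h1 h3 c)
      (by simpa [hu] using IsDoubleNormalPair.abs_inner_smul_le hdn2 h1 h3 c) hvspan
  rw [hv, mul_one] at hbound
  calc |⟪c • (y1 - y2), v⟫| ≤ 2 * (π - ∠ y1 y2 y3) / sin (∠ x1 y2 x2) :=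
        (le_div_iff₀ hsin).2 hbound
    _ < 2 * ε / sin (∠ x1 y2 x2) := by gcongr; linarith

theorem stmt_2 {d : ℕ} (V : Set (EuclideanSpace ℝ (Fin d)))
    (x1 x2 y1 y2 y3 : EuclideanSpace ℝ (Fin d))
    (hx1 : x1 ∈ V) (hx2 : x2 ∈ V) (h1 : y1 ∈ V) (h2 : y2 ∈ V) (h3 : y3 ∈ V)
    (hdist : [x1, x2, y1, y2, y3].Pairwise (· ≠ ·))
    (hdn1 : ∀ z ∈ V, 0 ≤ ⟪z - y2, x1 - y2⟫ ∧ 0 ≤ ⟪z - x1, y2 - x1⟫)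
    (hdn2 : ∀ z ∈ V, 0 ≤ ⟪z - y2, x2 - y2⟫ ∧ 0 ≤ ⟪z - x2, y2 - x2⟫)
    {ε : ℝ} (hε : 0 < ε)
    (hang : π - ε < ∠ y1 y2 y3)
    (u v : EuclideanSpace ℝ (Fin d)) (hu : ‖u‖ = 1) (hv : ‖v‖ = 1)
    (hupar : ∃ c : ℝ, u = c • (y1 - y2))
    (hvspan : v ∈ Submodule.span ℝ {x1 - y2, x2 - y2}) :
    |⟪u, v⟫| < 2 * ε / Real.sin (∠ x1 y2 x2) :=
  stmt_2_general V x1 x2 y1 y2 y3 hx1 hx2 h1 h3 hdist hdn1 hdn2 hang u v hu hv hupar hvspan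
end

section
/- Let x1, x2, y1, y2 be points in R^d satisfying ⟨x1 − y1, y2 − y1⟩ ≥ 0, ⟨x1 − y2, y1 − y2⟩ ≥ 0, and ⟨y2 − x2, y2 − y1⟩ ≥ 0, with y1 ≠ y2 and x1 ≠ x2. Let u = (y1 − y2)/‖y1 − y2‖ and u2 = (x1 − x2)/‖x1 − x2‖. Then 0 ≤ ⟨u, (x1 − y2)/‖x1 − y2‖⟩ ≤ ‖y2 − y1‖/‖x1 − y2‖ (assuming x1 ≠ y2), and ⟨u, u2⟩ ≤ ‖y1 − y2‖/‖x1 − x2‖. -/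
open RealInnerProductSpace

theorem stmt_4 {d : ℕ} (x1 x2 y1 y2 : EuclideanSpace ℝ (Fin d))
    (h1 : 0 ≤ ⟪x1 - y1, y2 - y1⟫) (h2 : 0 ≤ ⟪x1 - y2, y1 - y2⟫)
    (h3 : 0 ≤ ⟪y2 - x2, y2 - y1⟫)
    (hy : y1 ≠ y2) (hx : x1 ≠ x2) :
    (x1 ≠ y2 →
      0 ≤ ⟪‖y1 - y2‖⁻¹ • (y1 - y2), ‖x1 - y2‖⁻¹ • (x1 - y2)⟫ ∧
      ⟪‖y1 - y2‖⁻¹ • (y1 - y2), ‖x1 - y2‖⁻¹ • (x1 - y2)⟫ ≤ ‖y2 - y1‖ / ‖x1 - y2‖) ∧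
    ⟪‖y1 - y2‖⁻¹ • (y1 - y2), ‖x1 - x2‖⁻¹ • (x1 - x2)⟫ ≤ ‖y1 - y2‖ / ‖x1 - x2‖ := by
  have ha : (0:ℝ) < ‖y1 - y2‖ := norm_pos_iff.mpr (sub_ne_zero.mpr hy)
  have key1 : ⟪y1 - y2, x1 - y2⟫ ≤ ‖y1 - y2‖ ^ 2 := by
    have hdecomp : x1 - y2 = (x1 - y1) + (y1 - y2) := by abel
    rw [hdecomp, inner_add_right, real_inner_self_eq_norm_sq]
    have h1' : ⟪y1 - y2, x1 - y1⟫ ≤ 0 := by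
      have : ⟪x1 - y1, y2 - y1⟫ = -⟪y1 - y2, x1 - y1⟫ := by
        rw [real_inner_comm]
        rw [show (y2 - y1 : EuclideanSpace ℝ (Fin d)) = -(y1 - y2) by abel, inner_neg_left]
      linarith
    linarith
  have key2 : ⟪y1 - y2, x1 - x2⟫ ≤ ‖y1 - y2‖ ^ 2 := by
    have hdecomp : x1 - x2 = (x1 - y2) + (y2 - x2) := by abel
    rw [hdecomp, inner_add_right]
    have h3' : ⟪y1 - y2, y2 - x2⟫ ≤ 0 := by
      have : ⟪y2 - x2, y2 - y1⟫ = -⟪y1 - y2, y2 - x2⟫ := by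
        rw [real_inner_comm]
        rw [show (y2 - y1 : EuclideanSpace ℝ (Fin d)) = -(y1 - y2) by abel, inner_neg_left]
      linarith
    linarith
  constructor
  · intro hxy
    have hb : (0:ℝ) < ‖x1 - y2‖ := norm_pos_iff.mpr (sub_ne_zero.mpr hxy)
    rw [real_inner_smul_left, real_inner_smul_right]
    have h2' : 0 ≤ ⟪y1 - y2, x1 - y2⟫ := by rwa [real_inner_comm]
    constructor
    · positivity
    · rw [norm_sub_rev y2 y1, div_eq_mul_inv]
      have step : ‖y1 - y2‖⁻¹ * (‖x1 - y2‖⁻¹ * ⟪y1 - y2, x1 - y2⟫) ≤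
          ‖y1 - y2‖⁻¹ * (‖x1 - y2‖⁻¹ * ‖y1 - y2‖ ^ 2) := by gcongr
      have heq : ‖y1 - y2‖⁻¹ * (‖x1 - y2‖⁻¹ * ‖y1 - y2‖ ^ 2) = ‖y1 - y2‖ * ‖x1 - y2‖⁻¹ := by
        field_simp
      linarith
  · have hb : (0:ℝ) < ‖x1 - x2‖ := norm_pos_iff.mpr (sub_ne_zero.mpr hx)
    rw [real_inner_smul_left, real_inner_smul_right, div_eq_mul_inv]
    have step : ‖y1 - y2‖⁻¹ * (‖x1 - x2‖⁻¹ * ⟪y1 - y2, x1 - x2⟫) ≤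
        ‖y1 - y2‖⁻¹ * (‖x1 - x2‖⁻¹ * ‖y1 - y2‖ ^ 2) := by gcongr
    have heq : ‖y1 - y2‖⁻¹ * (‖x1 - x2‖⁻¹ * ‖y1 - y2‖ ^ 2) = ‖y1 - y2‖ * ‖x1 - x2‖⁻¹ := by
      field_simp
    linarith
end

section
/- Let A, B, C be distinct subsets of {1,…,d} and let χ(S) ∈ {0,1}^d denote the characteristic vector of S ⊆ {1,…,d}. Then ⟨χ(A) − χ(C), χ(B) − χ(C)⟩ ≥ 0, and equality holds if and only if A ∩ B ⊆ C ⊆ A ∪ B. -/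
open RealInnerProductSpace

/-- The characteristic vector of a subset of `{1,…,d}` as a point of `ℝ^d`. -/
def chi {d : ℕ} (S : Finset (Fin d)) : EuclideanSpace ℝ (Fin d) :=
  WithLp.toLp 2 (fun i => if i ∈ S then 1 else 0)

/-! The inner product counts the coordinates `i` at which `i ∈ A, i ∈ B, i ∉ C` or
`i ∉ A, i ∉ B, i ∈ C`; every other coordinate contributes `0`. Hence it is a natural number,
and it vanishes exactly when `(A ∩ B) \ C` and `C \ (A ∪ B)` are empty. -/

open Finset

lemma chi_apply {d : ℕ} (S : Finset (Fin d)) (i : Fin d) :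
    chi S i = if i ∈ S then 1 else 0 := rfl

lemma sum_chi_apply {d : ℕ} (S : Finset (Fin d)) : ∑ i, chi S i = #S := by
  simp [chi_apply]

lemma boole_sub_mul_boole_sub {R : Type*} [Ring R] (p q r : Prop)
    [Decidable p] [Decidable q] [Decidable r] :
    ((if p then 1 else 0) - (if r then 1 else 0)) *
        ((if q then 1 else 0) - (if r then 1 else 0) : R) =
      (if p ∧ q ∧ ¬r then 1 else 0) + (if r ∧ ¬(p ∨ q) then 1 else 0) := by
  by_cases p <;> by_cases q <;> by_cases r <;> simp [*]

theorem inner_chi_sub_chi_eq_card {d : ℕ} (A B C : Finset (Fin d)) :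
    ⟪chi A - chi C, chi B - chi C⟫ = #((A ∩ B) \ C) + #(C \ (A ∪ B)) := by
  rw [← sum_chi_apply, ← sum_chi_apply, ← sum_add_distrib, PiLp.inner_apply]
  refine sum_congr rfl fun i _ => ?_
  simp only [PiLp.sub_apply, chi_apply, RCLike.inner_apply, conj_trivial, mem_sdiff, mem_inter,
    mem_union, and_assoc]
  rw [mul_comm, boole_sub_mul_boole_sub]

theorem stmt_8_general {d : ℕ} (A B C : Finset (Fin d)) :
    0 ≤ ⟪chi A - chi C, chi B - chi C⟫ ∧
    (⟪chi A - chi C, chi B - chi C⟫ = 0 ↔ A ∩ B ⊆ C ∧ C ⊆ A ∪ B) := by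
  rw [inner_chi_sub_chi_eq_card]
  refine ⟨by positivity, ?_⟩
  norm_cast
  simp only [Nat.add_eq_zero_iff, card_eq_zero, sdiff_eq_empty_iff_subset]

theorem stmt_8 {d : ℕ} (A B C : Finset (Fin d))
    (hAB : A ≠ B) (hAC : A ≠ C) (hBC : B ≠ C) :
    0 ≤ ⟪chi A - chi C, chi B - chi C⟫ ∧
    (⟪chi A - chi C, chi B - chi C⟫ = 0 ↔ A ∩ B ⊆ C ∧ C ⊆ A ∪ B) :=
  stmt_8_general A B C
end

section
/- If A, B, C are subsets of {1,…,d} chosen independently and uniformly at random, then P( 4|A ∩ C| + |B| ≥ 2|A ∩ B| + |A| + 2|C| ) ≤ (65/72)^d. -/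
/-!
Write X = 4|A ∩ C| + |B| - 2|A ∩ B| - |A| - 2|C| as a sum of independent coordinate contributions
`excess (i ∈ A) (i ∈ B) (i ∈ C)`, each uniform on {1, 0, -1, -2}. Markov's inequality for
(3/2)^X gives P(X ≥ 0) ≤ E[(3/2)^X] = (E[(3/2)^X₁])^d = ((3/2 + 1 + 2/3 + 4/9) / 4)^d = (65/72)^d.
-/

open Finset

theorem zpow_sum₀ {ι G : Type*} [CommGroupWithZero G] {θ : G} (hθ : θ ≠ 0) (s : Finset ι)
    (f : ι → ℤ) : θ ^ (∑ i ∈ s, f i) = ∏ i ∈ s, θ ^ f i := by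
  induction s using Finset.cons_induction with
  | empty => simp
  | cons a s ha ih => rw [sum_cons, prod_cons, zpow_add₀ hθ, ih]

theorem card_filter_nonneg_le_sum_zpow {α K : Type*} [Semifield K] [LinearOrder K]
    [IsStrictOrderedRing K] (s : Finset α) (f : α → ℤ) {θ : K} (hθ : 1 ≤ θ) :
    (#{x ∈ s | 0 ≤ f x} : K) ≤ ∑ x ∈ s, θ ^ f x := by
  rw [card_eq_sum_ones, Nat.cast_sum, sum_filter]
  gcongr with x
  split_ifs with h
  · simpa using one_le_zpow₀ hθ h
  · positivity

section Membership

variable {ι : Type*} [Fintype ι] [DecidableEq ι]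

theorem sum_finset_prod_decide_mem {R : Type*} [CommSemiring R] (g : ι → Bool → R) :
    ∑ A : Finset ι, ∏ i, g i (decide (i ∈ A)) = ∏ i, ∑ b, g i b := by
  simp only [Fintype.sum_bool, prod_add, powerset_univ]
  refine sum_congr rfl fun A _ => ?_
  rw [← prod_mul_prod_compl A]
  congr 1
  · exact prod_congr rfl fun i hi => by simp [hi]
  · exact prod_congr rfl fun i hi => by simp [mem_compl.1 hi]

theorem sum_finset_triple_prod_decide_mem {R : Type*} [CommSemiring R]
    (w : Bool → Bool → Bool → R) :
    ∑ t : Finset ι × Finset ι × Finset ι, ∏ i, w (i ∈ t.1) (i ∈ t.2.1) (i ∈ t.2.2) =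
      (∑ a, ∑ b, ∑ c, w a b c) ^ Fintype.card ι := calc
  _ = ∑ A : Finset ι, ∑ B : Finset ι, ∏ i, ∑ c, w (i ∈ A) (i ∈ B) c := by
    simp only [Fintype.sum_prod_type]
    exact sum_congr rfl fun A _ => sum_congr rfl fun B _ =>
      sum_finset_prod_decide_mem fun i c => w (i ∈ A) (i ∈ B) c
  _ = ∑ A : Finset ι, ∏ i, ∑ b, ∑ c, w (i ∈ A) b c :=
    sum_congr rfl fun A _ => sum_finset_prod_decide_mem fun i b => ∑ c, w (i ∈ A) b c
  _ = _ := by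
    rw [sum_finset_prod_decide_mem fun i a => ∑ b, ∑ c, w a b c, prod_const, card_univ]

theorem intCast_card_eq_sum_toNat_decide_mem (s : Finset ι) :
    (#s : ℤ) = ∑ i, ((decide (i ∈ s)).toNat : ℤ) := by
  simp [Bool.toNat, Bool.cond_decide]

end Membership

def excess (a b c : Bool) : ℤ :=
  4 * (a && c).toNat + b.toNat - 2 * (a && b).toNat - a.toNat - 2 * c.toNat

theorem sum_excess_decide_mem {ι : Type*} [Fintype ι] [DecidableEq ι] (A B C : Finset ι) :
    ∑ i, excess (i ∈ A) (i ∈ B) (i ∈ C) =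
      4 * #(A ∩ C) + #B - 2 * #(A ∩ B) - #A - 2 * #C := by
  simp only [intCast_card_eq_sum_toNat_decide_mem, excess, mem_inter, Bool.decide_and,
    sum_sub_distrib, sum_add_distrib, mul_sum]

theorem sum_three_halves_zpow_excess :
    ∑ a, ∑ b, ∑ c, (3 / 2 : ℝ) ^ excess a b c = 65 / 9 := by
  norm_num [excess]

theorem card_filter_excess_nonneg_le {ι : Type*} [Fintype ι] [DecidableEq ι] :
    (#{t : Finset ι × Finset ι × Finset ι |
        2 * #(t.1 ∩ t.2.1) + #t.1 + 2 * #t.2.2 ≤ 4 * #(t.1 ∩ t.2.2) + #t.2.1} : ℝ) ≤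
      (65 / 9) ^ Fintype.card ι := calc
  _ = (#{t : Finset ι × Finset ι × Finset ι |
        0 ≤ ∑ i, excess (i ∈ t.1) (i ∈ t.2.1) (i ∈ t.2.2)} : ℝ) := by
    congr 2
    refine filter_congr fun t _ => ?_
    rw [sum_excess_decide_mem]
    omega
  _ ≤ ∑ t : Finset ι × Finset ι × Finset ι,
        (3 / 2 : ℝ) ^ ∑ i, excess (i ∈ t.1) (i ∈ t.2.1) (i ∈ t.2.2) :=
    card_filter_nonneg_le_sum_zpow _ _ (by norm_num)
  _ = (65 / 9) ^ Fintype.card ι := by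
    simp only [zpow_sum₀ (by norm_num : (3 / 2 : ℝ) ≠ 0)]
    rw [sum_finset_triple_prod_decide_mem fun a b c => (3 / 2 : ℝ) ^ excess a b c,
      sum_three_halves_zpow_excess]

theorem stmt_13 (d : ℕ) :
    ((Finset.univ.filter
        (fun t : Finset (Fin d) × Finset (Fin d) × Finset (Fin d) =>
          2 * (t.1 ∩ t.2.1).card + t.1.card + 2 * t.2.2.card
            ≤ 4 * (t.1 ∩ t.2.2).card + t.2.1.card)).card : ℝ) / (8 : ℝ) ^ d
      ≤ (65 / 72 : ℝ) ^ d := by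
  rw [div_le_iff₀ (by positivity), ← mul_pow]
  refine card_filter_excess_nonneg_le.trans_eq ?_
  norm_num
end

section
/- For every integer d ≥ 42, there exist m = ⌊(1/4)e^{d/20}⌋ distinct subsets A1, …, Am of {1,…,d} such that for all triples of distinct indices i, j, k: (a) it is NOT the case that Ai ∩ Aj ⊆ Ak ⊆ Ai ∪ Aj, and (b) 4|Ai ∩ Aj| + |Ak| < 2|Ai ∩ Ak| + |Ai| + 2|Aj|. -/
open Finset

open Finset

variable {d : ℕ}

def e3 (d : ℕ) : (Fin d → Bool × Bool × Bool) ≃ (Finset (Fin d) × Finset (Fin d) × Finset (Fin d)) where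
  toFun h := (univ.filter fun x => (h x).1 = true,
              univ.filter fun x => (h x).2.1 = true,
              univ.filter fun x => (h x).2.2 = true)
  invFun t := fun x => (decide (x ∈ t.1), decide (x ∈ t.2.1), decide (x ∈ t.2.2))
  left_inv h := by
    funext x
    simp only [mem_filter, mem_univ, true_and]
    ext <;> simp
  right_inv t := by
    ext x <;> simp

lemma triple_sum_prod (g : Bool → Bool → Bool → ℝ) :
    ∑ X : Finset (Fin d), ∑ Y : Finset (Fin d), ∑ Z : Finset (Fin d),
      ∏ x : Fin d, g (decide (x ∈ X)) (decide (x ∈ Y)) (decide (x ∈ Z))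
    = (∑ a : Bool, ∑ b : Bool, ∑ c : Bool, g a b c) ^ d := by
  have h1 : (∑ a : Bool, ∑ b : Bool, ∑ c : Bool, g a b c) ^ d
      = ∏ x : Fin d, (∑ p : Bool × Bool × Bool, g p.1 p.2.1 p.2.2) := by
    rw [Finset.prod_const, card_univ, Fintype.card_fin]
    congr 1
    rw [Fintype.sum_prod_type]
    congr 1; funext a; rw [Fintype.sum_prod_type]
  have h2 : ∏ x : Fin d, (∑ p : Bool × Bool × Bool, g p.1 p.2.1 p.2.2)
      = ∑ h : Fin d → Bool × Bool × Bool, ∏ x : Fin d, g (h x).1 (h x).2.1 (h x).2.2 := by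
    rw [Finset.prod_univ_sum, Fintype.piFinset_univ]
  have h3 : ∑ h : Fin d → Bool × Bool × Bool, ∏ x : Fin d, g (h x).1 (h x).2.1 (h x).2.2
      = ∑ t : Finset (Fin d) × Finset (Fin d) × Finset (Fin d),
          ∏ x : Fin d, g (decide (x ∈ t.1)) (decide (x ∈ t.2.1)) (decide (x ∈ t.2.2)) := by
    apply Fintype.sum_bijective (e3 d) (e3 d).bijective
    intro h
    apply Finset.prod_congr rfl
    intro x _
    simp [e3]
  rw [h1, h2, h3, Fintype.sum_prod_type]
  congr 1; funext X; rw [Fintype.sum_prod_type]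
open Finset
variable {d : ℕ}


noncomputable def gA : Bool → Bool → Bool → ℝ := fun a b c =>
  if (a = true → b = true → c = true) ∧ (c = true → (a = true ∨ b = true)) then 1 else 0

lemma gA_nonneg (a b c : Bool) : 0 ≤ gA a b c := by unfold gA; positivity

lemma count_a :
    ∑ X : Finset (Fin d), ∑ Y : Finset (Fin d), ∑ Z : Finset (Fin d),
      (if X ∩ Y ⊆ Z ∧ Z ⊆ X ∪ Y then (1:ℝ) else 0) ≤ 6 ^ d := by
  have key : ∑ X : Finset (Fin d), ∑ Y : Finset (Fin d), ∑ Z : Finset (Fin d),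
      (if X ∩ Y ⊆ Z ∧ Z ⊆ X ∪ Y then (1:ℝ) else 0)
      ≤ ∑ X : Finset (Fin d), ∑ Y : Finset (Fin d), ∑ Z : Finset (Fin d),
      ∏ x : Fin d, gA (decide (x ∈ X)) (decide (x ∈ Y)) (decide (x ∈ Z)) := by
    refine Finset.sum_le_sum fun X _ => Finset.sum_le_sum fun Y _ => Finset.sum_le_sum fun Z _ => ?_
    by_cases h : X ∩ Y ⊆ Z ∧ Z ⊆ X ∪ Y
    · rw [if_pos h]
      rw [Finset.prod_eq_one]
      intro x _
      unfold gA
      rw [if_pos]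
      constructor
      · intro hx hy
        simp only [decide_eq_true_eq] at *
        exact h.1 (Finset.mem_inter.2 ⟨hx, hy⟩)
      · intro hz
        simp only [decide_eq_true_eq] at *
        simpa [Finset.mem_union] using h.2 hz
    · rw [if_neg h]
      exact Finset.prod_nonneg fun x _ => gA_nonneg _ _ _
  refine key.trans ?_
  rw [triple_sum_prod]
  have : (∑ a : Bool, ∑ b : Bool, ∑ c : Bool, gA a b c) = 6 := by
    rw [Fintype.sum_bool]
    simp only [Fintype.sum_bool, gA]
    norm_num
  rw [this]
open Finset
variable {d : ℕ}


def wB : Bool → Bool → Bool → ℕ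
  | false, false, false => 2
  | false, false, true  => 3
  | false, true,  false => 0
  | false, true,  true  => 1
  | true,  false, false => 1
  | true,  false, true  => 0
  | true,  true,  false => 3
  | true,  true,  true  => 2

lemma card_eq_sum_ite (X : Finset (Fin d)) :
    X.card = ∑ x : Fin d, (if x ∈ X then 1 else 0) := by
  rw [Finset.sum_boole]
  simp

lemma sum_wB (X Y Z : Finset (Fin d)) :
    (∑ x : Fin d, wB (decide (x ∈ X)) (decide (x ∈ Y)) (decide (x ∈ Z)))
      + (2 * (X ∩ Z).card + X.card + 2 * Y.card)
    = 4 * (X ∩ Y).card + Z.card + 2 * d := by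
  have hpt : ∀ x : Fin d,
      wB (decide (x ∈ X)) (decide (x ∈ Y)) (decide (x ∈ Z))
        + (2 * (if x ∈ X ∩ Z then 1 else 0) + (if x ∈ X then 1 else 0)
            + 2 * (if x ∈ Y then 1 else 0))
      = 4 * (if x ∈ X ∩ Y then 1 else 0) + (if x ∈ Z then 1 else 0) + 2 := by
    intro x
    by_cases hX : x ∈ X <;> by_cases hY : x ∈ Y <;> by_cases hZ : x ∈ Z <;>
      simp [wB, Finset.mem_inter, hX, hY, hZ]
  have hsum := Finset.sum_congr rfl (fun x (_ : x ∈ (univ : Finset (Fin d))) => hpt x)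
  simp only [Finset.sum_add_distrib, ← Finset.mul_sum, ← card_eq_sum_ite,
    Finset.sum_const, Finset.card_univ, Fintype.card_fin, smul_eq_mul] at hsum
  omega


noncomputable def gB : Bool → Bool → Bool → ℝ := fun a b c => (4/9) * (3/2) ^ (wB a b c)

lemma gB_nonneg (a b c : Bool) : 0 ≤ gB a b c := by unfold gB; positivity

lemma count_b :
    ∑ X : Finset (Fin d), ∑ Y : Finset (Fin d), ∑ Z : Finset (Fin d),
      (if 2 * (X ∩ Z).card + X.card + 2 * Y.card ≤ 4 * (X ∩ Y).card + Z.card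
        then (1:ℝ) else 0) ≤ (65/9) ^ d := by
  have key : ∑ X : Finset (Fin d), ∑ Y : Finset (Fin d), ∑ Z : Finset (Fin d),
      (if 2 * (X ∩ Z).card + X.card + 2 * Y.card ≤ 4 * (X ∩ Y).card + Z.card
        then (1:ℝ) else 0)
      ≤ ∑ X : Finset (Fin d), ∑ Y : Finset (Fin d), ∑ Z : Finset (Fin d),
      ∏ x : Fin d, gB (decide (x ∈ X)) (decide (x ∈ Y)) (decide (x ∈ Z)) := by
    refine Finset.sum_le_sum fun X _ => Finset.sum_le_sum fun Y _ => Finset.sum_le_sum fun Z _ => ?_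
    by_cases h : 2 * (X ∩ Z).card + X.card + 2 * Y.card ≤ 4 * (X ∩ Y).card + Z.card
    · rw [if_pos h]
      have hw : 2 * d ≤ ∑ x : Fin d, wB (decide (x ∈ X)) (decide (x ∈ Y)) (decide (x ∈ Z)) := by
        have := sum_wB X Y Z
        omega
      have hprod : ∏ x : Fin d, gB (decide (x ∈ X)) (decide (x ∈ Y)) (decide (x ∈ Z))
          = (4/9 : ℝ) ^ d * (3/2) ^ (∑ x : Fin d, wB (decide (x ∈ X)) (decide (x ∈ Y)) (decide (x ∈ Z))) := by
        unfold gB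
        rw [Finset.prod_mul_distrib, Finset.prod_const, Finset.card_univ, Fintype.card_fin,
          Finset.prod_pow_eq_pow_sum]
      rw [hprod]
      have h1 : ((3:ℝ)/2) ^ (2 * d) ≤ (3/2) ^ (∑ x : Fin d, wB (decide (x ∈ X)) (decide (x ∈ Y)) (decide (x ∈ Z))) := by
        apply pow_le_pow_right₀ (by norm_num) hw
      calc (1:ℝ) = (4/9 : ℝ)^d * (3/2)^(2*d) := by
                rw [pow_mul, ← mul_pow]; norm_num
        _ ≤ _ := by
                apply mul_le_mul_of_nonneg_left h1 (by positivity)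
    · rw [if_neg h]
      exact Finset.prod_nonneg fun x _ => gB_nonneg _ _ _
  refine key.trans ?_
  rw [triple_sum_prod]
  have : (∑ a : Bool, ∑ b : Bool, ∑ c : Bool, gB a b c) = 65/9 := by
    rw [Fintype.sum_bool]
    simp only [Fintype.sum_bool, gB, wB]
    norm_num
  rw [this]
open Finset

/-- Split functions at three distinct points. -/
def eSplit3 {M : ℕ} {γ : Type*} (i j k : Fin M) (hij : i ≠ j) (hjk : j ≠ k) (hik : i ≠ k) :
    (Fin M → γ) ≃ γ × γ × γ × (({i, j, k}ᶜ : Finset (Fin M)) → γ) where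
  toFun f := (f i, f j, f k, fun l => f l.1)
  invFun t := fun l =>
    if h1 : l = i then t.1 else if h2 : l = j then t.2.1 else if h3 : l = k then t.2.2.1
    else t.2.2.2 ⟨l, by simp [h1, h2, h3]⟩
  left_inv f := by
    funext l
    by_cases h1 : l = i
    · simp [h1]
    · by_cases h2 : l = j
      · subst h2; simp [h1]
      · by_cases h3 : l = k
        · subst h3; simp [h1, h2]
        · simp [h1, h2, h3]
  right_inv t := by
    ext
    · simp
    · simp [hij.symm]
    · simp [hik.symm, hjk.symm]
    · next l =>
      have hl := l.2
      simp only [Finset.mem_compl, Finset.mem_insert, Finset.mem_singleton, not_or] at hl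
      simp [hl.1, hl.2.1, hl.2.2]

lemma marg3 {M : ℕ} {γ : Type*} [Fintype γ] [DecidableEq γ] (i j k : Fin M)
    (hij : i ≠ j) (hjk : j ≠ k) (hik : i ≠ k) (F : γ → γ → γ → ℝ) :
    ∑ f : Fin M → γ, F (f i) (f j) (f k)
      = (∑ X : γ, ∑ Y : γ, ∑ Z : γ, F X Y Z) * (Fintype.card γ : ℝ) ^ (M - 3) := by
  have h := Fintype.sum_bijective (eSplit3 i j k hij hjk hik)
    (eSplit3 i j k hij hjk hik).bijective
    (fun f : Fin M → γ => F (f i) (f j) (f k))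
    (fun t => F t.1 t.2.1 t.2.2.1) (fun f => rfl)
  rw [h, Fintype.sum_prod_type]
  have hcard : Fintype.card (({i, j, k}ᶜ : Finset (Fin M)) → γ)
      = Fintype.card γ ^ (M - 3) := by
    rw [Fintype.card_fun, Fintype.card_coe, Finset.card_compl,
      Finset.card_insert_of_notMem (by simp [hij, hik]),
      Finset.card_insert_of_notMem (by simp [hjk]), Finset.card_singleton, Fintype.card_fin]
  calc ∑ X : γ, ∑ t : γ × γ × (({i, j, k}ᶜ : Finset (Fin M)) → γ), F X t.1 t.2.1
      = ∑ X : γ, ∑ Y : γ, ∑ t : γ × (({i, j, k}ᶜ : Finset (Fin M)) → γ), F X Y t.1 := by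
        congr 1; funext X; rw [Fintype.sum_prod_type]
    _ = ∑ X : γ, ∑ Y : γ, ∑ Z : γ, ∑ _g : (({i, j, k}ᶜ : Finset (Fin M)) → γ), F X Y Z := by
        congr 1; funext X; congr 1; funext Y; rw [Fintype.sum_prod_type]
    _ = _ := by
        simp only [Finset.sum_const, Finset.card_univ, hcard, nsmul_eq_mul]
        push_cast
        simp only [Finset.sum_mul]
        simp [mul_comm]
open Finset

def eSplit2 {M : ℕ} {γ : Type*} (i j : Fin M) (hij : i ≠ j) :
    (Fin M → γ) ≃ γ × γ × (({i, j}ᶜ : Finset (Fin M)) → γ) where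
  toFun f := (f i, f j, fun l => f l.1)
  invFun t := fun l =>
    if h1 : l = i then t.1 else if h2 : l = j then t.2.1
    else t.2.2 ⟨l, by simp [h1, h2]⟩
  left_inv f := by
    funext l
    by_cases h1 : l = i
    · simp [h1]
    · by_cases h2 : l = j
      · subst h2; simp [h1]
      · simp [h1, h2]
  right_inv t := by
    ext
    · simp
    · simp [hij.symm]
    · next l =>
      have hl := l.2
      simp only [Finset.mem_compl, Finset.mem_insert, Finset.mem_singleton, not_or] at hl
      simp [hl.1, hl.2]

lemma marg2 {M : ℕ} {γ : Type*} [Fintype γ] [DecidableEq γ] (i j : Fin M)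
    (hij : i ≠ j) (F : γ → γ → ℝ) :
    ∑ f : Fin M → γ, F (f i) (f j)
      = (∑ X : γ, ∑ Y : γ, F X Y) * (Fintype.card γ : ℝ) ^ (M - 2) := by
  have h := Fintype.sum_bijective (eSplit2 i j hij) (eSplit2 i j hij).bijective
    (fun f : Fin M → γ => F (f i) (f j)) (fun t => F t.1 t.2.1) (fun f => rfl)
  rw [h, Fintype.sum_prod_type]
  have hcard : Fintype.card (({i, j}ᶜ : Finset (Fin M)) → γ)
      = Fintype.card γ ^ (M - 2) := by
    rw [Fintype.card_fun, Fintype.card_coe, Finset.card_compl,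
      Finset.card_insert_of_notMem (by simp [hij]), Finset.card_singleton, Fintype.card_fin]
  calc ∑ X : γ, ∑ t : γ × (({i, j}ᶜ : Finset (Fin M)) → γ), F X t.1
      = ∑ X : γ, ∑ Y : γ, ∑ _g : (({i, j}ᶜ : Finset (Fin M)) → γ), F X Y := by
        congr 1; funext X; rw [Fintype.sum_prod_type]
    _ = _ := by
        simp only [Finset.sum_const, Finset.card_univ, hcard, nsmul_eq_mul]
        push_cast
        simp only [Finset.sum_mul]
        simp [mul_comm]

lemma exp_tenth : Real.exp (1/10) ≤ 72/65 := by
  have h10 : (Real.exp (1/10)) ^ 10 = Real.exp 1 := by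
    rw [← Real.exp_nat_mul]; norm_num
  apply le_of_pow_le_pow_left₀ (n := 10) (by norm_num) (by norm_num)
  rw [h10]
  have := Real.exp_one_lt_d9
  nlinarith [this]

lemma numeric (d m : ℕ) (hd : 42 ≤ d)
    (hm : (m:ℝ) ≤ (1/4) * Real.exp ((d:ℝ)/20)) :
    ((2*m : ℕ):ℝ)^3 * (6^d + (65/9)^d) + ((2*m : ℕ):ℝ)^2 * 4^d ≤ (m:ℝ) * 8^d := by
  set r : ℝ := 72/65 with hr
  have hrpos : (0:ℝ) < r := by rw [hr]; norm_num
  have he10 : Real.exp ((d:ℝ)/10) ≤ r^d := by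
    calc Real.exp ((d:ℝ)/10) = (Real.exp (1/10))^d := by rw [← Real.exp_nat_mul]; ring_nf
      _ ≤ r^d := pow_le_pow_left₀ (Real.exp_pos _).le exp_tenth d
  have he20 : Real.exp ((d:ℝ)/20) ≤ r^d := by
    calc Real.exp ((d:ℝ)/20) ≤ Real.exp ((d:ℝ)/10) := by
          apply Real.exp_le_exp.2
          have : (0:ℝ) ≤ (d:ℝ) := Nat.cast_nonneg d
          linarith
      _ ≤ r^d := he10
  have hexpsq : Real.exp ((d:ℝ)/20) * Real.exp ((d:ℝ)/20) = Real.exp ((d:ℝ)/10) := by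
    rw [← Real.exp_add]; ring_nf
  have hm0 : (0:ℝ) ≤ (m:ℝ) := Nat.cast_nonneg m
  have h8pos : (0:ℝ) < (8:ℝ)^d := by positivity
  have h6pos : (0:ℝ) < (6:ℝ)^d := by positivity
  have h4pos : (0:ℝ) < (4:ℝ)^d := by positivity
  have h659pos : (0:ℝ) < ((65:ℝ)/9)^d := by positivity
  have hmsq : (m:ℝ)^2 ≤ (1/16) * r^d := by
    have h1 := mul_le_mul hm hm hm0 (by positivity)
    have h2 : Real.exp ((d:ℝ)/20) * Real.exp ((d:ℝ)/20) ≤ r^d := by rw [hexpsq]; exact he10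
    nlinarith [Real.exp_pos ((d:ℝ)/20)]
  have h4m : 4*(m:ℝ) ≤ r^d := by nlinarith
  -- A2
  have hA2 : 8 * (m:ℝ)^2 * (65/9)^d ≤ (1/2) * 8^d := by
    have hkey : (r:ℝ)^d * (65/9)^d = (8:ℝ)^d := by
      rw [← mul_pow]; norm_num
    have h1 := mul_le_mul_of_nonneg_right hmsq h659pos.le
    rw [mul_assoc, hkey] at h1
    linarith
  -- A1
  have h56 : ((5:ℝ)/6)^d ≤ 1/4 := by
    calc ((5:ℝ)/6)^d ≤ (5/6)^8 := by
          apply pow_le_pow_of_le_one (by norm_num) (by norm_num) (by omega)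
      _ ≤ 1/4 := by norm_num
  have hA1 : 8 * (m:ℝ)^2 * 6^d ≤ (1/8) * 8^d := by
    have hr6 : (r:ℝ)^d * 6^d ≤ (20/3:ℝ)^d := by
      rw [← mul_pow]
      apply pow_le_pow_left₀ (by positivity)
      rw [hr]; norm_num
    have h203 : ((20:ℝ)/3)^d = 8^d * (5/6)^d := by rw [← mul_pow]; norm_num
    have h1 := mul_le_mul_of_nonneg_right hmsq h6pos.le
    have h2 := mul_le_mul_of_nonneg_left h56 h8pos.le
    rw [h203] at hr6
    nlinarith [pow_pos hrpos d]
  -- A3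
  have hA3 : 4 * (m:ℝ) * 4^d ≤ (3/8) * 8^d := by
    have hr4 : (r:ℝ)^d * 4^d ≤ (9/2:ℝ)^d := by
      rw [← mul_pow]
      apply pow_le_pow_left₀ (by positivity)
      rw [hr]; norm_num
    have h916 : ((9:ℝ)/16)^d ≤ 81/256 := by
      calc ((9:ℝ)/16)^d ≤ (9/16)^2 := by
            apply pow_le_pow_of_le_one (by norm_num) (by norm_num) (by omega)
        _ ≤ 81/256 := by norm_num
    have h92 : ((9:ℝ)/2)^d = 8^d * (9/16)^d := by rw [← mul_pow]; norm_num
    have h1 := mul_le_mul_of_nonneg_right h4m h4pos.le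
    have h2 := mul_le_mul_of_nonneg_left h916 h8pos.le
    rw [h92] at hr4
    linarith
  have hcast : ((2*m : ℕ):ℝ) = 2*(m:ℝ) := by push_cast; ring
  rw [hcast]
  have expand : (2*(m:ℝ))^3 * (6^d + (65/9)^d) + (2*(m:ℝ))^2 * 4^d
      = (m:ℝ) * (8 * (m:ℝ)^2 * 6^d + 8 * (m:ℝ)^2 * (65/9)^d + 4 * (m:ℝ) * 4^d) := by
    ring
  rw [expand]
  have hsum : 8 * (m:ℝ)^2 * 6^d + 8 * (m:ℝ)^2 * (65/9)^d + 4 * (m:ℝ) * 4^d ≤ 8^d := by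
    linarith
  exact (mul_le_mul_of_nonneg_left hsum hm0).trans (by linarith)
open Finset

variable {d : ℕ}

def BadT (d : ℕ) (X Y Z : Finset (Fin d)) : Prop :=
  (X ∩ Y ⊆ Z ∧ Z ⊆ X ∪ Y) ∨
  (2 * (X ∩ Z).card + X.card + 2 * Y.card ≤ 4 * (X ∩ Y).card + Z.card)

instance badT_dec (d : ℕ) (X Y Z : Finset (Fin d)) : Decidable (BadT d X Y Z) := by
  unfold BadT; infer_instance



lemma count_bad :
    ∑ X : Finset (Fin d), ∑ Y : Finset (Fin d), ∑ Z : Finset (Fin d),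
      (if BadT d X Y Z then (1:ℝ) else 0) ≤ 6 ^ d + (65/9) ^ d := by
  have hpt : ∀ X Y Z : Finset (Fin d), (if BadT d X Y Z then (1:ℝ) else 0)
      ≤ (if X ∩ Y ⊆ Z ∧ Z ⊆ X ∪ Y then (1:ℝ) else 0)
        + (if 2 * (X ∩ Z).card + X.card + 2 * Y.card ≤ 4 * (X ∩ Y).card + Z.card
            then (1:ℝ) else 0) := by
    intro X Y Z
    unfold BadT
    by_cases h1 : X ∩ Y ⊆ Z ∧ Z ⊆ X ∪ Y <;>
      by_cases h2 : 2 * (X ∩ Z).card + X.card + 2 * Y.card ≤ 4 * (X ∩ Y).card + Z.card <;>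
      simp [h1, h2]
  calc ∑ X : Finset (Fin d), ∑ Y : Finset (Fin d), ∑ Z : Finset (Fin d),
        (if BadT d X Y Z then (1:ℝ) else 0)
      ≤ ∑ X : Finset (Fin d), ∑ Y : Finset (Fin d), ∑ Z : Finset (Fin d),
        ((if X ∩ Y ⊆ Z ∧ Z ⊆ X ∪ Y then (1:ℝ) else 0)
          + (if 2 * (X ∩ Z).card + X.card + 2 * Y.card ≤ 4 * (X ∩ Y).card + Z.card
              then (1:ℝ) else 0)) := by
        refine Finset.sum_le_sum fun X _ => Finset.sum_le_sum fun Y _ =>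
          Finset.sum_le_sum fun Z _ => hpt X Y Z
    _ = _ + _ := by simp [Finset.sum_add_distrib]
    _ ≤ 6 ^ d + (65/9) ^ d := add_le_add count_a count_b




lemma main_construct (d m : ℕ) (hd : 42 ≤ d) (hm2 : 2 ≤ m)
    (hm : (m:ℝ) ≤ (1/4) * Real.exp ((d:ℝ)/20)) :
    ∃ A : Fin m → Finset (Fin d), Function.Injective A ∧
      ∀ i j k : Fin m, i ≠ j → j ≠ k → i ≠ k → ¬ BadT d (A i) (A j) (A k) := by
  set M := 2 * m with hM
  set N : ℝ := (2:ℝ) ^ d with hN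
  have hM3 : 3 ≤ M := by omega
  set badT : (Fin M → Finset (Fin d)) → Finset (Fin M × Fin M × Fin M) := fun f =>
    univ.filter fun t => (t.1 ≠ t.2.1 ∧ t.2.1 ≠ t.2.2 ∧ t.1 ≠ t.2.2) ∧
      BadT d (f t.1) (f t.2.1) (f t.2.2) with hbadT
  set badP : (Fin M → Finset (Fin d)) → Finset (Fin M × Fin M) := fun f =>
    univ.filter fun p => p.1 ≠ p.2 ∧ f p.1 = f p.2 with hbadP
  have hcardγ : ((Fintype.card (Finset (Fin d)) : ℕ) : ℝ) = N := by
    rw [Fintype.card_finset, Fintype.card_fin]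
    push_cast
    rw [hN]
  have hNpos : (0:ℝ) < N := by rw [hN]; positivity
  -- average of badT card
  have havgT : ∑ f : Fin M → Finset (Fin d), ((badT f).card : ℝ)
      ≤ (M:ℝ)^3 * ((6^d + (65/9)^d) * N ^ (M - 3)) := by
    have hcardT : ∀ f : Fin M → Finset (Fin d), ((badT f).card : ℝ)
        = ∑ t : Fin M × Fin M × Fin M,
            if (t.1 ≠ t.2.1 ∧ t.2.1 ≠ t.2.2 ∧ t.1 ≠ t.2.2) ∧
              BadT d (f t.1) (f t.2.1) (f t.2.2) then (1:ℝ) else 0 := by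
      intro f; rw [Finset.sum_boole]
    calc ∑ f : Fin M → Finset (Fin d), ((badT f).card : ℝ)
        = ∑ t : Fin M × Fin M × Fin M, ∑ f : Fin M → Finset (Fin d),
            (if (t.1 ≠ t.2.1 ∧ t.2.1 ≠ t.2.2 ∧ t.1 ≠ t.2.2) ∧
              BadT d (f t.1) (f t.2.1) (f t.2.2) then (1:ℝ) else 0) := by
          simp only [hcardT]
          rw [Finset.sum_comm]
      _ ≤ ∑ _t : Fin M × Fin M × Fin M, ((6^d + (65/9)^d) * N ^ (M - 3)) := by
          refine Finset.sum_le_sum fun t _ => ?_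
          by_cases hdist : t.1 ≠ t.2.1 ∧ t.2.1 ≠ t.2.2 ∧ t.1 ≠ t.2.2
          · have heq : ∑ f : Fin M → Finset (Fin d),
                (if (t.1 ≠ t.2.1 ∧ t.2.1 ≠ t.2.2 ∧ t.1 ≠ t.2.2) ∧
                  BadT d (f t.1) (f t.2.1) (f t.2.2) then (1:ℝ) else 0)
                = ∑ f : Fin M → Finset (Fin d),
                (if BadT d (f t.1) (f t.2.1) (f t.2.2) then (1:ℝ) else 0) := by
              refine Finset.sum_congr rfl fun f _ => ?_
              by_cases hb : BadT d (f t.1) (f t.2.1) (f t.2.2)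
              · rw [if_pos ⟨hdist, hb⟩, if_pos hb]
              · rw [if_neg (fun h => hb h.2), if_neg hb]
            rw [heq, marg3 t.1 t.2.1 t.2.2 hdist.1 hdist.2.1 hdist.2.2
              (fun X Y Z => if BadT d X Y Z then (1:ℝ) else 0), hcardγ]
            have hNpow : (0:ℝ) ≤ N ^ (M - 3) := by positivity
            exact mul_le_mul_of_nonneg_right count_bad hNpow
          · have heq : ∑ f : Fin M → Finset (Fin d),
                (if (t.1 ≠ t.2.1 ∧ t.2.1 ≠ t.2.2 ∧ t.1 ≠ t.2.2) ∧
                  BadT d (f t.1) (f t.2.1) (f t.2.2) then (1:ℝ) else 0) = 0 := by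
              refine Finset.sum_eq_zero fun f _ => ?_
              rw [if_neg (fun h => hdist h.1)]
            rw [heq]
            positivity
      _ = (M:ℝ)^3 * ((6^d + (65/9)^d) * N ^ (M - 3)) := by
          rw [Finset.sum_const, Finset.card_univ, Fintype.card_prod, Fintype.card_prod,
            Fintype.card_fin, nsmul_eq_mul]
          push_cast
          ring
  -- average of badP card
  have havgP : ∑ f : Fin M → Finset (Fin d), ((badP f).card : ℝ)
      ≤ (M:ℝ)^2 * (N * N ^ (M - 2)) := by
    have hcardP : ∀ f : Fin M → Finset (Fin d), ((badP f).card : ℝ)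
        = ∑ p : Fin M × Fin M,
            if p.1 ≠ p.2 ∧ f p.1 = f p.2 then (1:ℝ) else 0 := by
      intro f; rw [Finset.sum_boole]
    have hdiag : (∑ X : Finset (Fin d), ∑ Y : Finset (Fin d), if X = Y then (1:ℝ) else 0)
        = N := by
      have hrow : ∀ X : Finset (Fin d),
          (∑ Y : Finset (Fin d), if X = Y then (1:ℝ) else 0) = 1 := by
        intro X
        rw [Finset.sum_ite_eq (univ : Finset (Finset (Fin d))) X (fun _ => (1:ℝ))]
        simp
      simp only [hrow]
      rw [Finset.sum_const, Finset.card_univ, nsmul_eq_mul, mul_one, hcardγ]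
    calc ∑ f : Fin M → Finset (Fin d), ((badP f).card : ℝ)
        = ∑ p : Fin M × Fin M, ∑ f : Fin M → Finset (Fin d),
            (if p.1 ≠ p.2 ∧ f p.1 = f p.2 then (1:ℝ) else 0) := by
          simp only [hcardP]; rw [Finset.sum_comm]
      _ ≤ ∑ _p : Fin M × Fin M, (N * N ^ (M - 2)) := by
          refine Finset.sum_le_sum fun p _ => ?_
          by_cases hdist : p.1 ≠ p.2
          · have heq : ∑ f : Fin M → Finset (Fin d),
                (if p.1 ≠ p.2 ∧ f p.1 = f p.2 then (1:ℝ) else 0)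
                = ∑ f : Fin M → Finset (Fin d), (if f p.1 = f p.2 then (1:ℝ) else 0) := by
              refine Finset.sum_congr rfl fun f _ => ?_
              by_cases hb : f p.1 = f p.2
              · rw [if_pos ⟨hdist, hb⟩, if_pos hb]
              · rw [if_neg (fun h => hb h.2), if_neg hb]
            rw [heq, marg2 p.1 p.2 hdist (fun X Y => if X = Y then (1:ℝ) else 0), hcardγ, hdiag]
          · have heq : ∑ f : Fin M → Finset (Fin d),
                (if p.1 ≠ p.2 ∧ f p.1 = f p.2 then (1:ℝ) else 0) = 0 := by
              refine Finset.sum_eq_zero fun f _ => ?_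
              rw [if_neg (fun h => hdist h.1)]
            rw [heq]
            positivity
      _ = (M:ℝ)^2 * (N * N ^ (M - 2)) := by
          rw [Finset.sum_const, Finset.card_univ, Fintype.card_prod, Fintype.card_fin,
            nsmul_eq_mul]
          push_cast
          ring
  -- combine
  have hNM : ∑ f : Fin M → Finset (Fin d), (((badT f).card : ℝ) + ((badP f).card : ℝ))
      ≤ (m:ℝ) * N ^ M := by
    rw [Finset.sum_add_distrib]
    have hnum := numeric d m hd hm
    have hpow3 : (0:ℝ) ≤ N ^ (M - 3) := by positivity
    have e1 : N * N ^ (M - 2) = (4:ℝ)^d * N ^ (M - 3) := by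
      have h1 : N ^ (M - 2) = N ^ (M - 3) * N := by
        rw [← pow_succ]; congr 1; omega
      rw [h1, hN, show (4:ℝ)^d = 2^d * 2^d by rw [← mul_pow]; norm_num]
      ring
    have e2 : (m:ℝ) * N ^ M = ((m:ℝ) * 8^d) * N ^ (M - 3) := by
      have h1 : N ^ M = N ^ (M - 3) * N^3 := by
        rw [← pow_add]; congr 1; omega
      rw [h1, hN, show (8:ℝ)^d = 2^d * (2^d * 2^d) by rw [← mul_pow, ← mul_pow]; norm_num]
      ring
    rw [e2]
    have hMc : (M:ℝ) = ((2*m : ℕ):ℝ) := by rw [hM]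
    calc (∑ f : Fin M → Finset (Fin d), ((badT f).card : ℝ))
          + ∑ f : Fin M → Finset (Fin d), ((badP f).card : ℝ)
        ≤ (M:ℝ)^3 * ((6^d + (65/9)^d) * N ^ (M - 3)) + (M:ℝ)^2 * (N * N ^ (M - 2)) :=
          add_le_add havgT havgP
      _ = ((M:ℝ)^3 * (6^d + (65/9)^d) + (M:ℝ)^2 * 4^d) * N ^ (M - 3) := by
          rw [e1]; ring
      _ ≤ ((m:ℝ) * 8^d) * N ^ (M - 3) := by
          refine mul_le_mul_of_nonneg_right ?_ hpow3
          rw [hMc]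
          exact hnum
  -- find a good tuple
  have hex : ∃ f : Fin M → Finset (Fin d), (badT f).card + (badP f).card ≤ m := by
    have hne : (univ : Finset (Fin M → Finset (Fin d))).Nonempty := univ_nonempty
    have hcardfun : ((Fintype.card (Fin M → Finset (Fin d)) : ℕ) : ℝ) = N ^ M := by
      rw [Fintype.card_fun, Fintype.card_fin]
      push_cast
      rw [hcardγ]
    have hsum : ∑ f : Fin M → Finset (Fin d), (((badT f).card : ℝ) + ((badP f).card : ℝ))
        ≤ ∑ _f : Fin M → Finset (Fin d), (m:ℝ) := by
      rw [Finset.sum_const, Finset.card_univ, nsmul_eq_mul, hcardfun]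
      rw [mul_comm]
      exact hNM
    obtain ⟨f, _, hf⟩ := Finset.exists_le_of_sum_le hne hsum
    refine ⟨f, ?_⟩
    exact_mod_cast hf
  obtain ⟨f, hf⟩ := hex
  -- deletion
  set D : Finset (Fin M) := (badT f).image (fun t => t.1) ∪ (badP f).image Prod.fst with hD
  have hDcard : D.card ≤ m := by
    calc D.card ≤ ((badT f).image (fun t => t.1)).card + ((badP f).image Prod.fst).card :=
          Finset.card_union_le _ _
      _ ≤ (badT f).card + (badP f).card :=
          add_le_add Finset.card_image_le Finset.card_image_le
      _ ≤ m := hf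
  have hScard : m ≤ Dᶜ.card := by
    rw [Finset.card_compl, Fintype.card_fin]
    omega
  obtain ⟨S', hS'sub, hS'card⟩ := Finset.exists_subset_card_eq hScard
  have hS'D : ∀ l ∈ S', l ∉ D := fun l hl => by
    have := hS'sub hl
    simpa using this
  set ι := S'.orderIsoOfFin hS'card with hι
  refine ⟨fun i => f (ι i : Fin M), ?_, ?_⟩
  · intro i j hfij
    by_contra hne2
    have hιij : (ι i : Fin M) ≠ (ι j : Fin M) := by
      intro h
      exact hne2 (ι.injective (Subtype.ext h))
    have hmem : ((ι i : Fin M), (ι j : Fin M)) ∈ badP f := by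
      rw [hbadP]
      simp only [Finset.mem_filter, Finset.mem_univ, true_and]
      exact ⟨hιij, hfij⟩
    have hmemD : (ι i : Fin M) ∈ D := by
      rw [hD]
      exact Finset.mem_union_right _ (Finset.mem_image_of_mem Prod.fst hmem)
    exact hS'D _ (ι i).2 hmemD
  · intro i j k hij hjk hik hbad
    have h1 : (ι i : Fin M) ≠ (ι j : Fin M) := fun h => hij (ι.injective (Subtype.ext h))
    have h2 : (ι j : Fin M) ≠ (ι k : Fin M) := fun h => hjk (ι.injective (Subtype.ext h))
    have h3 : (ι i : Fin M) ≠ (ι k : Fin M) := fun h => hik (ι.injective (Subtype.ext h))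
    have hmem : ((ι i : Fin M), (ι j : Fin M), (ι k : Fin M)) ∈ badT f := by
      rw [hbadT]
      simp only [Finset.mem_filter, Finset.mem_univ, true_and]
      exact ⟨⟨h1, h2, h3⟩, hbad⟩
    have hmemD : (ι i : Fin M) ∈ D := by
      rw [hD]
      exact Finset.mem_union_left _ (Finset.mem_image_of_mem (fun t => t.1) hmem)
    exact hS'D _ (ι i).2 hmemD
open Finset


lemma singleton_construct (d m : ℕ) (hmd : m ≤ d) :
    ∃ A : Fin m → Finset (Fin d), Function.Injective A ∧
      ∀ i j k : Fin m, i ≠ j → j ≠ k → i ≠ k → ¬ BadT d (A i) (A j) (A k) := by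
  set c : Fin m → Fin d := Fin.castLE hmd with hc
  have hcinj : Function.Injective c := Fin.castLE_injective hmd
  refine ⟨fun i => {c i}, ?_, ?_⟩
  · intro i j h
    exact hcinj (Finset.singleton_inj.mp h)
  · intro i j k hij hjk hik hbad
    rcases hbad with ⟨_, hsub2⟩ | hle
    · have hmem : c k ∈ ({c i} ∪ {c j} : Finset (Fin d)) :=
        hsub2 (Finset.mem_singleton_self _)
      rw [Finset.mem_union, Finset.mem_singleton, Finset.mem_singleton] at hmem
      rcases hmem with h | h
      · exact hik (hcinj h).symm
      · exact hjk (hcinj h).symm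
    · have hij' : c i ∉ ({c j} : Finset (Fin d)) := by
        rw [Finset.mem_singleton]
        exact fun h => hij (hcinj h)
      rw [Finset.singleton_inter_of_notMem hij'] at hle
      simp at hle

theorem stmt_18 (d : ℕ) (hd : 42 ≤ d) (m : ℕ)
    (hm : m = ⌊(1 / 4 : ℝ) * Real.exp ((d : ℝ) / 20)⌋₊) :
    ∃ A : Fin m → Finset (Fin d), Function.Injective A ∧
      ∀ i j k : Fin m, i ≠ j → j ≠ k → i ≠ k →
        ¬(A i ∩ A j ⊆ A k ∧ A k ⊆ A i ∪ A j) ∧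
        4 * (A i ∩ A j).card + (A k).card
          < 2 * (A i ∩ A k).card + (A i).card + 2 * (A j).card := by
  have hkey : ∃ A : Fin m → Finset (Fin d), Function.Injective A ∧
      ∀ i j k : Fin m, i ≠ j → j ≠ k → i ≠ k → ¬ BadT d (A i) (A j) (A k) := by
    by_cases hmd : m ≤ d
    · exact singleton_construct d m hmd
    · refine main_construct d m hd (by omega) ?_
      rw [hm]
      apply Nat.floor_le
      positivity
  obtain ⟨A, hinj, hA⟩ := hkey
  refine ⟨A, hinj, fun i j k hij hjk hik => ?_⟩
  have h := hA i j k hij hjk hik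
  unfold BadT at h
  rw [not_or] at h
  refine ⟨h.1, ?_⟩
  have h2 := h.2
  omega
end

section
/- Let C be a circle in the plane with center c and let p q be a diameter of C. Let b be a point strictly between c and q on the segment cq. Let x be a point on C with x ≠ p, q, and let ℓ be the line through x perpendicular to the segment bx. Then ℓ intersects C in a second point y ≠ x, and y lies on the open arc of C between x and p not containing q (the minor arc on the same side as x). -/
open RealInnerProductSpace EuclideanGeometry

private lemma aux_pos {r t a : ℝ} (hr : 0 < r) (ht0 : 0 < t) (ht1 : t < 1)
    (hb : a < r ^ 2) (hl : -(r ^ 2) < a) :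
    0 < r ^ 2 + 2 * t * a + t ^ 2 * r ^ 2 ∧ 0 < t * a + r ^ 2 ∧ 0 < 1 - t ^ 2 := by
  refine ⟨?_, ?_, by nlinarith⟩ <;>
    nlinarith [mul_lt_mul_of_pos_left hl ht0, mul_pos hr hr,
      mul_lt_mul_of_pos_left (mul_pos hr hr) ht0, sq_nonneg (1 - t),
      mul_pos (mul_pos hr hr) (mul_pos (sub_pos.2 ht1) (sub_pos.2 ht1))]

private lemma aux_norm {r t a α β : ℝ}
    (hW : r ^ 2 + 2 * t * a + t ^ 2 * r ^ 2 ≠ 0)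
    (hα : α = 2 * t * (t * a + r ^ 2) / (r ^ 2 + 2 * t * a + t ^ 2 * r ^ 2))
    (hβ : β = r ^ 2 * (1 - t ^ 2) / (r ^ 2 + 2 * t * a + t ^ 2 * r ^ 2)) :
    α ^ 2 * r ^ 2 + 2 * (α * β) * a + β ^ 2 * r ^ 2 = r ^ 2 := by
  subst hα hβ
  field_simp
  ring

private lemma aux_perp {r t a α β : ℝ}
    (hW : r ^ 2 + 2 * t * a + t ^ 2 * r ^ 2 ≠ 0)
    (hα : α = 2 * t * (t * a + r ^ 2) / (r ^ 2 + 2 * t * a + t ^ 2 * r ^ 2))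
    (hβ : β = r ^ 2 * (1 - t ^ 2) / (r ^ 2 + 2 * t * a + t ^ 2 * r ^ 2)) :
    α * (t * r ^ 2 + a) + (β - 1) * (t * a + r ^ 2) = 0 := by
  subst hα hβ
  field_simp
  ring

private lemma aux_indep {r a γ δ : ℝ} (hr : 0 < r) (hb : a < r ^ 2) (hl : -(r ^ 2) < a)
    (h1 : γ * r ^ 2 + δ * a = 0) (h2 : γ * a + δ * r ^ 2 = 0) : γ = 0 ∧ δ = 0 := by
  have hpos : 0 < r ^ 4 - a ^ 2 := by nlinarith
  have hγ : γ * (r ^ 4 - a ^ 2) = 0 := by linear_combination r ^ 2 * h1 - a * h2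
  have hγ0 : γ = 0 := by
    rcases mul_eq_zero.1 hγ with h | h
    · exact h
    · linarith
  refine ⟨hγ0, ?_⟩
  rw [hγ0, zero_mul, zero_add] at h2
  rcases mul_eq_zero.1 h2 with h | h
  · exact h
  · nlinarith

private lemma aux_sq_one {r a r' : ℝ} (hr : 0 < r) (hb : a < r ^ 2) (hl : -(r ^ 2) < a)
    (ha : a = r' * r ^ 2) (h2 : r' * (r' * r ^ 2) = r ^ 2) : False := by
  have h3 : (r' - 1) * ((r' + 1) * r ^ 2) = 0 := by linear_combination h2 - r ^ 2
  have hr2 : r ^ 2 ≠ 0 := pow_ne_zero _ hr.ne'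
  rcases mul_eq_zero.1 h3 with h | h
  · have : r' = 1 := by linarith
    rw [this, one_mul] at ha
    exact absurd ha.symm.le (not_le.2 hb)
  · rcases mul_eq_zero.1 h with h | h
    · have : r' = -1 := by linarith
      rw [this] at ha
      linarith
    · exact hr2 h

private lemma aux_sum {t₁ t₂ t₀ : ℝ} (hπ1 : |t₁| < Real.pi) (hπ2 : |t₂| < Real.pi)
    (hπ0 : |t₀| ≤ Real.pi)
    (hsign : (0 < t₁ ∧ 0 < t₂ ∧ 0 < t₀) ∨ (t₁ < 0 ∧ t₂ < 0 ∧ t₀ < 0))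
    (hk : ∃ k : ℤ, t₁ + t₂ - t₀ = 2 * Real.pi * k) :
    |t₁| + |t₂| = |t₀| := by
  obtain ⟨k, hk⟩ := hk
  have hπ := Real.pi_pos
  rw [abs_lt] at hπ1 hπ2
  rw [abs_le] at hπ0
  have hkb : -1 < (k : ℝ) ∧ (k : ℝ) < 1 := by
    constructor <;> rcases hsign with ⟨h1, h2, h0⟩ | ⟨h1, h2, h0⟩ <;> nlinarith
  have hk0 : k = 0 := by
    have h1 : (-1 : ℤ) < k := by exact_mod_cast hkb.1
    have h2 : k < 1 := by exact_mod_cast hkb.2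
    omega
  rw [hk0] at hk
  push_cast at hk
  have hsum : t₁ + t₂ = t₀ := by linarith
  rcases hsign with ⟨h1, h2, h0⟩ | ⟨h1, h2, h0⟩
  · rw [abs_of_pos h1, abs_of_pos h2, abs_of_pos h0]; linarith
  · rw [abs_of_neg h1, abs_of_neg h2, abs_of_neg h0]; linarith

theorem stmt_19 (c p q b x : EuclideanSpace ℝ (Fin 2)) {r t : ℝ}
    (hr : 0 < r) (hp : ‖p - c‖ = r) (hq : q = c + (c - p))
    (ht : t ∈ Set.Ioo (0 : ℝ) 1) (hb : b = c + t • (q - c))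
    (hx : ‖x - c‖ = r) (hxp : x ≠ p) (hxq : x ≠ q) :
    ∃ y : EuclideanSpace ℝ (Fin 2),
      y ≠ x ∧ ‖y - c‖ = r ∧ ⟪y - x, b - x⟫ = 0 ∧
      -- `y` lies on the open arc of the circle between `x` and `p`
      -- (the arc not containing `q`), expressed via additivity of central angles:
      y ≠ p ∧ ∠ p c y + ∠ y c x = ∠ p c x := by
  haveI hfact : Fact (Module.finrank ℝ (EuclideanSpace ℝ (Fin 2)) = 2) :=
    ⟨finrank_euclideanSpace_fin⟩
  set o : Orientation ℝ (EuclideanSpace ℝ (Fin 2)) (Fin 2) :=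
    ((stdOrthonormalBasis ℝ (EuclideanSpace ℝ (Fin 2))).toBasis.reindex
      (finCongr finrank_euclideanSpace_fin)).orientation with ho
  clear_value o
  clear ho
  obtain ⟨ht0, ht1⟩ := ht
  set u : EuclideanSpace ℝ (Fin 2) := x - c with hu
  set v : EuclideanSpace ℝ (Fin 2) := p - c with hv
  have hw : b - x = -(t • v + u) := by
    rw [hb, hq, hu, hv]; module
  have huu : ⟪u, u⟫ = r ^ 2 := by rw [real_inner_self_eq_norm_sq, hx]
  have hvv : ⟪v, v⟫ = r ^ 2 := by rw [real_inner_self_eq_norm_sq, hp]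
  set a : ℝ := ⟪u, v⟫ with haa
  have hav : ⟪v, u⟫ = a := real_inner_comm u v ▸ rfl
  have haub : a < r ^ 2 := by
    have hle : a ≤ r * r := (real_inner_le_norm u v).trans_eq (by rw [hx, hp])
    rcases lt_or_eq_of_le hle with h | h
    · nlinarith
    · exfalso
      have hvu : ‖v‖ • u = ‖u‖ • v := by
        rw [← inner_eq_norm_mul_iff_real, ← haa, h, hx, hp]
      rw [hx, hp] at hvu
      apply hxp
      have huv : u = v := smul_right_injective _ hr.ne' hvu
      have := congrArg (· + c) huv
      simpa [hu, hv] using this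
  have haul : -(r ^ 2) < a := by
    have hle : ⟪u, -v⟫ ≤ r * r := (real_inner_le_norm u (-v)).trans_eq (by
      rw [hx, norm_neg, hp])
    rw [inner_neg_right, ← haa] at hle
    rcases lt_or_eq_of_le hle with h | h
    · nlinarith
    · exfalso
      have hvu : ‖(-v : EuclideanSpace ℝ (Fin 2))‖ • u = ‖u‖ • (-v) := by
        rw [← inner_eq_norm_mul_iff_real, inner_neg_right, norm_neg, hx, hp, ← haa, h]
      rw [hx, norm_neg, hp] at hvu
      apply hxq
      have huv : u = -v := smul_right_injective _ hr.ne' hvu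
      have := congrArg (· + c) huv
      rw [hq]
      have hxx : x = -v + c := by simpa [hu] using this
      rw [hxx, hv]; abel
  have huwv : ⟪u, b - x⟫ = -(t * a + r ^ 2) := by
    rw [hw]
    simp only [inner_neg_right, inner_add_right, real_inner_smul_right, huu, ← haa]
    try ring
  have hvwv : ⟪v, b - x⟫ = -(t * r ^ 2 + a) := by
    rw [hw]
    simp only [inner_neg_right, inner_add_right, real_inner_smul_right, hvv, hav]
    try ring
  clear_value u v a
  clear hb hq hw
  obtain ⟨hWpos, htar, ht2⟩ := aux_pos hr ht0 ht1 haub haul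
  set W : ℝ := r ^ 2 + 2 * t * a + t ^ 2 * r ^ 2 with hWdef
  clear_value W
  set α : ℝ := 2 * t * (t * a + r ^ 2) / W with hα
  set β : ℝ := r ^ 2 * (1 - t ^ 2) / W with hβ
  clear_value α β
  rw [hWdef] at hα hβ hWpos
  have hαpos : 0 < α := by
    rw [hα]
    exact div_pos (by positivity) hWpos
  have hβpos : 0 < β := by
    rw [hβ]
    exact div_pos (by positivity) hWpos
  -- linear independence of v, u
  have hind : ∀ γ δ : ℝ, γ • v + δ • u = 0 → γ = 0 ∧ δ = 0 := by
    intro γ δ h0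
    have h1 : γ * r ^ 2 + δ * a = 0 := by
      have h' := congrArg (fun z => ⟪v, z⟫) h0
      simp only [inner_add_right, real_inner_smul_right, hvv, hav, inner_zero_right] at h'
      linear_combination h'
    have h2 : γ * a + δ * r ^ 2 = 0 := by
      have h' := congrArg (fun z => ⟪u, z⟫) h0
      simp only [inner_add_right, real_inner_smul_right, huu, ← haa, inner_zero_right] at h'
      linear_combination h'
    exact aux_indep hr haub haul h1 h2
  -- vector nonvanishing
  have hvo : v ≠ 0 := by
    intro h; rw [h, norm_zero] at hp; exact hr.ne hp
  have huo : u ≠ 0 := by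
    intro h; rw [h, norm_zero] at hx; exact hr.ne hx
  set w' : EuclideanSpace ℝ (Fin 2) := α • v + β • u with hw'
  clear_value w'
  have hyx : c + w' - x = α • v + (β - 1) • u := by rw [hw', hu]; module
  have hyp2 : c + w' - p = (α - 1) • v + β • u := by rw [hw', hv]; module
  have hw'o : w' ≠ 0 := by
    intro h
    exact hαpos.ne' (hind _ _ (hw' ▸ h)).1
  -- the point y
  refine ⟨c + w', ?_, ?_, ?_, ?_, ?_⟩
  · -- y ≠ x
    intro h
    have h0 : α • v + (β - 1) • u = 0 := by rw [← hyx, h, sub_self]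
    exact hαpos.ne' (hind _ _ h0).1
  · -- on the circle
    have hyc : c + w' - c = w' := by abel
    rw [hyc]
    have hin : ⟪w', w'⟫ = r ^ 2 := by
      rw [hw']
      simp only [inner_add_left, inner_add_right, real_inner_smul_left, real_inner_smul_right,
        huu, hvv, hav, ← haa]
      calc α * (α * r ^ 2) + α * (β * a) + (β * (α * a) + β * (β * r ^ 2))
          = α ^ 2 * r ^ 2 + 2 * (α * β) * a + β ^ 2 * r ^ 2 := by ring
        _ = r ^ 2 := aux_norm hWpos.ne' hα hβ
    have hn : ‖w'‖ ^ 2 = r ^ 2 := by rw [← real_inner_self_eq_norm_sq, hin]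
    have := congrArg Real.sqrt hn
    rwa [Real.sqrt_sq (norm_nonneg _), Real.sqrt_sq hr.le] at this
  · -- perpendicularity
    rw [hyx]
    simp only [inner_add_left, real_inner_smul_left, huwv, hvwv]
    linear_combination -(aux_perp hWpos.ne' hα hβ)
  · -- y ≠ p
    intro h
    have h0 : (α - 1) • v + β • u = 0 := by rw [← hyp2, h, sub_self]
    exact hβpos.ne' (hind _ _ h0).2
  · -- angle additivity
    have hy1 : ∠ p c (c + w') = InnerProductGeometry.angle v w' := by
      rw [EuclideanGeometry.angle, vsub_eq_sub, vsub_eq_sub, hv]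
      congr 1
      abel
    have hy2 : ∠ (c + w') c x = InnerProductGeometry.angle w' u := by
      rw [EuclideanGeometry.angle, vsub_eq_sub, vsub_eq_sub, hu]
      congr 1
      abel
    have hy3 : ∠ p c x = InnerProductGeometry.angle v u := by
      rw [EuclideanGeometry.angle, vsub_eq_sub, vsub_eq_sub, hu, hv]
    rw [hy1, hy2, hy3]
    rw [o.angle_eq_abs_oangle_toReal hvo hw'o, o.angle_eq_abs_oangle_toReal hw'o huo,
      o.angle_eq_abs_oangle_toReal hvo huo]
    -- signs
    have hs1 : (o.oangle v w').sign = (o.oangle v u).sign := by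
      rw [hw', o.oangle_sign_smul_add_smul_right v u α β, sign_pos hβpos, one_mul]
    have hs2 : (o.oangle w' u).sign = (o.oangle v u).sign := by
      rw [hw', o.oangle_sign_smul_add_smul_left v u α β, sign_pos hαpos, one_mul]
    have hs0 : (o.oangle v u).sign ≠ 0 := by
      intro h
      rcases o.eq_zero_or_angle_eq_zero_or_pi_of_sign_oangle_eq_zero h with h | h | h | h
      · exact hvo h
      · exact huo h
      · obtain ⟨-, r', -, hru⟩ := InnerProductGeometry.angle_eq_zero_iff.1 h
        refine aux_sq_one (r' := r') hr haub haul ?_ ?_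
        · rw [haa, hru, real_inner_smul_left, hvv]
        · have h2 := huu; rw [hru] at h2
          simp only [real_inner_smul_left, real_inner_smul_right, hvv] at h2
          exact h2
      · obtain ⟨-, r', -, hru⟩ := InnerProductGeometry.angle_eq_pi_iff.1 h
        refine aux_sq_one (r' := r') hr haub haul ?_ ?_
        · rw [haa, hru, real_inner_smul_left, hvv]
        · have h2 := huu; rw [hru] at h2
          simp only [real_inner_smul_left, real_inner_smul_right, hvv] at h2
          exact h2
    have hadd := o.oangle_add hvo hw'o huo
    -- reals
    have habs : ∀ θ : Real.Angle, θ.sign ≠ 0 → |θ.toReal| < Real.pi := by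
      intro θ hθ
      have hm := θ.toReal_mem_Ioc
      have hne : θ.toReal ≠ Real.pi := by
        intro h
        rw [Real.Angle.toReal_eq_pi_iff] at h
        rw [h] at hθ
        exact hθ Real.Angle.sign_coe_pi
      rw [abs_lt]
      exact ⟨hm.1, lt_of_le_of_ne hm.2 hne⟩
    have hpos' : ∀ θ : Real.Angle, θ.sign = (o.oangle v u).sign → (0 < θ.toReal ∧ 0 < (o.oangle v u).sign) ∨ (θ.toReal < 0 ∧ (o.oangle v u).sign < 0) := by
      intro θ hθ
      rcases lt_trichotomy θ.toReal 0 with h | h | h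
      · right
        refine ⟨h, ?_⟩
        rw [← hθ, Real.Angle.toReal_neg_iff_sign_neg.1 h]
        decide
      · exfalso
        apply hs0
        rw [← hθ]
        rw [Real.Angle.toReal_eq_zero_iff] at h
        rw [h, Real.Angle.sign_zero]
      · left
        refine ⟨h, ?_⟩
        rw [← hθ]
        rcases (Real.Angle.toReal_nonneg_iff_sign_nonneg.1 h.le).lt_or_eq with h' | h'
        · exact h'
        · exfalso
          apply hs0
          rw [← hθ, ← h']
    have hk : ∃ k : ℤ, (o.oangle v w').toReal + (o.oangle w' u).toReal - (o.oangle v u).toReal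
        = 2 * Real.pi * k := by
      rw [← Real.Angle.angle_eq_iff_two_pi_dvd_sub]
      rw [Real.Angle.coe_add, Real.Angle.coe_toReal, Real.Angle.coe_toReal,
        Real.Angle.coe_toReal]
      exact_mod_cast hadd
    refine aux_sum (habs _ (hs1.trans_ne hs0)) (habs _ (hs2.trans_ne hs0))
      (abs_le.2 ⟨(Real.Angle.toReal_mem_Ioc _).1.le, (Real.Angle.toReal_mem_Ioc _).2⟩) ?_ ?_
    · rcases hpos' _ hs1 with ⟨h1, hsp⟩ | ⟨h1, hsp⟩
      · left
        refine ⟨h1, (hpos' _ hs2).resolve_right (fun h => absurd h.2 (not_lt.2 hsp.le)) |>.1, ?_⟩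
        exact ((hpos' _ rfl).resolve_right (fun h => absurd h.2 (not_lt.2 hsp.le))).1
      · right
        refine ⟨h1, (hpos' _ hs2).resolve_left (fun h => absurd h.2 (not_lt.2 hsp.le)) |>.1, ?_⟩
        exact ((hpos' _ rfl).resolve_left (fun h => absurd h.2 (not_lt.2 hsp.le))).1
    · exact hk
end
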